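/- arXiv:1806.11531 — 2 statements merged into one kernel-verified Lean document; each statement's English description precedes it below -/
import Mathlib

section
/- For any stochastic matrix W from a finite set X to pmfs on a finite set Y, the function α ↦ ((1-α)/α)·C_α(W) is nonincreasing in α on (0,1), where C_α(W) is the order-α Rényi capacity. -/
open Real MeasureTheory Filter

def IsPMF {Y : Type*} [Fintype Y] (W : Y → ℝ) : Prop :=
  (∀ y, 0 ≤ W y) ∧ ∑ y, W y = 1

noncomputable def renyiDiv {Y : Type*} [Fintype Y] (α : ℝ) (W Q : Y → ℝ) : ℝ :=
  if α = 1 then ∑ y, W y * Real.log (W y / Q y)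
  else (α - 1)⁻¹ * Real.log (∑ y, W y ^ α * Q y ^ (1 - α))

open Classical in
/-- Extended-real-valued order-`α` Rényi divergence, taking the value `⊤` when the
divergence is infinite. -/
noncomputable def renyiDivE {Y : Type*} [Fintype Y] (α : ℝ) (W Q : Y → ℝ) : ENNReal :=
  if α = 1 then
    (if ∀ y, Q y = 0 → W y = 0 then ENNReal.ofReal (renyiDiv 1 W Q) else ⊤)
  else
    (if 0 < ∑ y, W y ^ α * Q y ^ (1 - α) then ENNReal.ofReal (renyiDiv α W Q) else ⊤)

/-- The order-`α` tilted pmf `W^α_Q`. -/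
noncomputable def tilt {Y : Type*} [Fintype Y] (α : ℝ) (W Q : Y → ℝ) : Y → ℝ :=
  fun y => Real.exp ((1 - α) * renyiDiv α W Q) * W y ^ α * Q y ^ (1 - α)

/-- The order-`α` Rényi information `I_α(P;W)` (mutual information for `α = 1`). -/
noncomputable def renyiInfo {X Y : Type*} [Fintype X] [Fintype Y] (α : ℝ) (P : X → ℝ)
    (W : X → Y → ℝ) : ℝ :=
  if α = 1 then ∑ x, P x * ∑ y, W x y * Real.log (W x y / (∑ x', P x' * W x' y))
  else (α / (α - 1)) * Real.log (∑ y, (∑ x, P x * W x y ^ α) ^ α⁻¹)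

/-- The order-`α` Rényi capacity `C_α(W) = sup_P I_α(P;W)`. -/
noncomputable def renyiCap {X Y : Type*} [Fintype X] [Fintype Y] (α : ℝ) (W : X → Y → ℝ) : ℝ :=
  sSup {c | ∃ P : X → ℝ, IsPMF P ∧ c = renyiInfo α P W}

/-- The sphere packing exponent `E_sp(R,W)`. -/
noncomputable def spe {X Y : Type*} [Fintype X] [Fintype Y] (R : ℝ) (W : X → Y → ℝ) : ℝ :=
  sSup {e | ∃ α ∈ Set.Ioo (0:ℝ) 1, e = ((1 - α) / α) * (renyiCap α W - R)}

/-- The order-`α` Rényi mean `q_{α,P}`. -/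
noncomputable def renyiMean {X Y : Type*} [Fintype X] [Fintype Y] (α : ℝ) (P : X → ℝ)
    (W : X → Y → ℝ) : Y → ℝ :=
  fun y => (∑ x, P x * W x y ^ α) ^ α⁻¹ / ∑ y', (∑ x, P x * W x y' ^ α) ^ α⁻¹

/-!
For `0 < α < 1` the scaled information `((1-α)/α) I_α(P;W)` equals `-log F_α(P)`, where
`F_α(P) = ∑_y (∑_x P(x) W(y|x)^α)^{1/α}` sums over `y` the `P`-weighted power means of order `α`
of `x ↦ W(y|x)`. Power means increase with their order, so for each `P` the scaled information
decreases in `α`, and a supremum of decreasing functions decreases. The supremum is finite because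
some `x` has `P(x) ≥ 1/|X|`, which gives `F_α(P) ≥ |X|^{-1/α}`.
-/

open Finset

theorem rpow_mean_le_rpow_mean {ι : Type*} (s : Finset ι) {w z : ι → ℝ}
    (hw : ∀ i ∈ s, 0 ≤ w i) (hw' : ∑ i ∈ s, w i = 1) (hz : ∀ i ∈ s, 0 ≤ z i)
    {p q : ℝ} (hp : 0 < p) (hpq : p ≤ q) :
    (∑ i ∈ s, w i * z i ^ p) ^ p⁻¹ ≤ (∑ i ∈ s, w i * z i ^ q) ^ q⁻¹ := by
  have hmean := Real.arith_mean_le_rpow_mean s w (fun i => z i ^ p) hw hw'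
    (fun i hi => Real.rpow_nonneg (hz i hi) p) ((one_le_div hp).2 hpq)
  have hpow : ∑ i ∈ s, w i * (z i ^ p) ^ (q / p) = ∑ i ∈ s, w i * z i ^ q :=
    sum_congr rfl fun i hi => by rw [← Real.rpow_mul (hz i hi), mul_div_cancel₀ q hp.ne']
  rw [hpow, one_div_div] at hmean
  have hsum_nonneg : 0 ≤ ∑ i ∈ s, w i * z i ^ q :=
    sum_nonneg fun i hi => mul_nonneg (hw i hi) (Real.rpow_nonneg (hz i hi) q)
  calc (∑ i ∈ s, w i * z i ^ p) ^ p⁻¹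
      ≤ ((∑ i ∈ s, w i * z i ^ q) ^ (p / q)) ^ p⁻¹ :=
        Real.rpow_le_rpow
          (sum_nonneg fun i hi => mul_nonneg (hw i hi) (Real.rpow_nonneg (hz i hi) p))
          hmean (inv_nonneg.2 hp.le)
    _ = (∑ i ∈ s, w i * z i ^ q) ^ q⁻¹ := by
        rw [← Real.rpow_mul hsum_nonneg, div_mul_eq_mul_div, mul_inv_cancel₀ hp.ne', one_div]

theorem IsPMF.nonempty {X : Type*} [Fintype X] {P : X → ℝ} (hP : IsPMF P) : Nonempty X :=
  (nonempty_of_sum_ne_zero (hP.2 ▸ one_ne_zero)).to_type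

theorem IsPMF.exists_inv_card_le {X : Type*} [Fintype X] {P : X → ℝ} (hP : IsPMF P) :
    ∃ x, (Fintype.card X : ℝ)⁻¹ ≤ P x := by
  have := hP.nonempty
  obtain ⟨x, -, hx⟩ := exists_le_of_sum_le univ_nonempty
    (f := fun _ => (Fintype.card X : ℝ)⁻¹) (g := P) (by
      rw [sum_const, hP.2, nsmul_eq_mul, card_univ,
        mul_inv_cancel₀ (Nat.cast_ne_zero.2 Fintype.card_ne_zero)])
  exact ⟨x, hx⟩

section PowerMeanSum

variable {X Y : Type*} [Fintype X] [Fintype Y]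

noncomputable def powerMeanSum (α : ℝ) (P : X → ℝ) (W : X → Y → ℝ) : ℝ :=
  ∑ y, (∑ x, P x * W x y ^ α) ^ α⁻¹

variable {α β : ℝ} {P : X → ℝ} {W : X → Y → ℝ}

theorem neg_log_powerMeanSum_eq (h0 : α ≠ 0) (h1 : α ≠ 1) :
    -Real.log (powerMeanSum α P W) = ((1 - α) / α) * renyiInfo α P W := by
  have h1' : α - 1 ≠ 0 := sub_ne_zero.2 h1
  rw [renyiInfo, if_neg h1, powerMeanSum]
  field_simp
  ring

theorem inv_card_rpow_le_powerMeanSum (hP : IsPMF P) (hW : ∀ x, IsPMF (W x)) (hα : 0 < α) :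
    (Fintype.card X : ℝ)⁻¹ ^ α⁻¹ ≤ powerMeanSum α P W := by
  have := hP.nonempty
  obtain ⟨x₀, hx₀⟩ := hP.exists_inv_card_le
  have hPx₀ : 0 ≤ P x₀ := hP.1 x₀
  have hterm : ∀ y, (P x₀ * W x₀ y ^ α) ^ α⁻¹ = P x₀ ^ α⁻¹ * W x₀ y := fun y => by
    rw [Real.mul_rpow hPx₀ (Real.rpow_nonneg ((hW x₀).1 y) _),
      Real.rpow_rpow_inv ((hW x₀).1 y) hα.ne']
  calc (Fintype.card X : ℝ)⁻¹ ^ α⁻¹ ≤ P x₀ ^ α⁻¹ :=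
        Real.rpow_le_rpow (by positivity) hx₀ (inv_nonneg.2 hα.le)
    _ = ∑ y, (P x₀ * W x₀ y ^ α) ^ α⁻¹ := by
        simp only [hterm, ← mul_sum, (hW x₀).2, mul_one]
    _ ≤ powerMeanSum α P W :=
        sum_le_sum fun y _ => Real.rpow_le_rpow
          (mul_nonneg hPx₀ (Real.rpow_nonneg ((hW x₀).1 y) _))
          (single_le_sum (f := fun x => P x * W x y ^ α)
            (fun x _ => mul_nonneg (hP.1 x) (Real.rpow_nonneg ((hW x).1 y) _)) (mem_univ x₀))
          (inv_nonneg.2 hα.le)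

theorem powerMeanSum_pos (hP : IsPMF P) (hW : ∀ x, IsPMF (W x)) (hα : 0 < α) :
    0 < powerMeanSum α P W := by
  have := hP.nonempty
  exact lt_of_lt_of_le (by positivity) (inv_card_rpow_le_powerMeanSum hP hW hα)

theorem neg_log_powerMeanSum_le (hP : IsPMF P) (hW : ∀ x, IsPMF (W x)) (hα : 0 < α) :
    -Real.log (powerMeanSum α P W) ≤ α⁻¹ * Real.log (Fintype.card X) := by
  have := hP.nonempty
  have h := Real.log_le_log (by positivity) (inv_card_rpow_le_powerMeanSum hP hW hα)
  rw [Real.log_rpow (by positivity), Real.log_inv] at h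
  linarith

theorem powerMeanSum_mono (hP : IsPMF P) (hW : ∀ x, IsPMF (W x)) (hα : 0 < α) (hαβ : α ≤ β) :
    powerMeanSum α P W ≤ powerMeanSum β P W :=
  sum_le_sum fun y _ => rpow_mean_le_rpow_mean univ (fun x _ => hP.1 x) hP.2
    (fun x _ => (hW x).1 y) hα hαβ

end PowerMeanSum

theorem renyiCap_eq_iSup {X Y : Type*} [Fintype X] [Fintype Y] (α : ℝ) (W : X → Y → ℝ) :
    renyiCap α W = ⨆ P : {P : X → ℝ // IsPMF P}, renyiInfo α P W := by
  rw [renyiCap, iSup]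
  congr 1
  ext c
  simp [eq_comm]

theorem scaled_renyiCap_eq_iSup {X Y : Type*} [Fintype X] [Fintype Y] {α : ℝ}
    (hα : α ∈ Set.Ioo 0 1) (W : X → Y → ℝ) :
    ((1 - α) / α) * renyiCap α W =
      ⨆ P : {P : X → ℝ // IsPMF P}, -Real.log (powerMeanSum α P W) := by
  rw [renyiCap_eq_iSup, Real.mul_iSup_of_nonneg (div_nonneg (by linarith [hα.2]) hα.1.le)]
  simp only [neg_log_powerMeanSum_eq hα.1.ne' hα.2.ne]

theorem renyiCap_scaled_antitone_general {X Y : Type*} [Fintype X] [Fintype Y]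
    (W : X → Y → ℝ) (hW : ∀ x, IsPMF (W x)) :
    AntitoneOn (fun α => ((1 - α) / α) * renyiCap α W) (Set.Ioo 0 1) := by
  intro α hα β hβ hαβ
  simp only [scaled_renyiCap_eq_iSup hα, scaled_renyiCap_eq_iSup hβ]
  refine ciSup_mono ⟨α⁻¹ * Real.log (Fintype.card X), ?_⟩ fun P => ?_
  · rintro _ ⟨P, rfl⟩
    exact neg_log_powerMeanSum_le P.2 hW hα.1
  · exact neg_le_neg (Real.log_le_log (powerMeanSum_pos P.2 hW hα.1)
      (powerMeanSum_mono P.2 hW hα.1 hαβ))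

/-- `((1-α)/α)·C_α(W)` is nonincreasing in `α` on `(0,1)`. -/
theorem renyiCap_scaled_antitone {X Y : Type*} [Fintype X] [Fintype Y] [Nonempty X]
    (W : X → Y → ℝ) (hW : ∀ x, IsPMF (W x)) :
    AntitoneOn (fun α => ((1 - α) / α) * renyiCap α W) (Set.Ioo 0 1) :=
  renyiCap_scaled_antitone_general W hW
end

section
/- For any α ∈ (0,1] and stochastic matrix W from a finite set X to pmfs on a finite set Y, the order-α Rényi capacity equals the order-α Rényi radius: C_α(W) = inf_{Q pmf on Y} max_{x ∈ X} D_α(W(·|x)‖Q). Moreover there exists a unique pmf q_{α,W} on Y (the order-α Rényi center) achieving the infimum, i.e., C_α(W) = max_{x} D_α(W(·|x)‖q_{α,W}). -/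
open Real MeasureTheory Filter
/-!
For `α < 1` write `I_α(P;W) = α/(α-1) · log T(P)` with `T(P) = ∑_y (∑_x P(x) W(y|x)^α)^(1/α)`,
and `D_α(W_x‖Q) = (α-1)⁻¹ · log A_x(Q)` with the affinity `A_x(Q) = ∑_y W(y|x)^α Q(y)^(1-α)`.
Hölder's inequality gives `∑_x P(x) A_x(Q) ≤ T(P)^α` for every `Q`, so some `x` has
`D_α(W_x‖Q) ≥ I_α(P;W)`: the radius is at least the capacity. Conversely, at a minimiser `P` of
the convex function `T` on the simplex, the first-order conditions in the directions of the
vertices say exactly that `A_x(q_{α,P}) ≥ T(P)^α` for every `x`, where `q_{α,P}` is the Rényi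
mean; so `q_{α,P}` is within `C_α(W)` of every `W_x`.

For `α = 1` the same roles are played by the golden formula
`∑_x P(x) D(W_x‖Q) = I(P;W) + D(PW‖Q)` and by the output distribution `PW` of a
capacity-achieving `P`. The first-order condition comes from perturbing `P` towards a vertex
`δ_x` and letting the perturbation vanish; the blow-up of `log` at `0` forces `W_x ≪ PW` on the way.

Uniqueness: if `q₁ ≠ q₂` both achieve the radius, the normalised power mean
`((q₁^(1-α) + q₂^(1-α))/2)^(1/(1-α))` (the geometric mean `√(q₁ q₂)` when `α = 1`) has total mass
`< 1` and is therefore strictly closer to every `W_x`, contradicting the lower bound.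
-/

open Set

section

variable {ι : Type*} [Fintype ι]

namespace IsPMF

variable {P : ι → ℝ}

theorem exists_pos (hP : IsPMF P) : ∃ i, 0 < P i := by
  by_contra! h
  have : ∑ i, P i ≤ 0 := Finset.sum_nonpos fun i _ => h i
  linarith [hP.2]

theorem le_one (hP : IsPMF P) (i : ι) : P i ≤ 1 :=
  hP.2 ▸ Finset.single_le_sum (fun i _ => hP.1 i) (Finset.mem_univ i)

theorem exists_le_of_sum_mul_le (hP : IsPMF P) {f : ι → ℝ} {c : ℝ}
    (h : ∑ i, P i * f i ≤ c) : ∃ i, f i ≤ c := by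
  by_contra! hc
  obtain ⟨i₀, hi₀⟩ := hP.exists_pos
  have : ∑ i, P i * c < ∑ i, P i * f i :=
    Finset.sum_lt_sum (fun i _ => mul_le_mul_of_nonneg_left (hc i).le (hP.1 i))
      ⟨i₀, Finset.mem_univ _, mul_lt_mul_of_pos_left (hc i₀) hi₀⟩
  rw [← Finset.sum_mul, hP.2, one_mul] at this
  linarith

theorem exists_le_of_le_sum_mul (hP : IsPMF P) {f : ι → ℝ} {c : ℝ}
    (h : c ≤ ∑ i, P i * f i) : ∃ i, c ≤ f i := by
  obtain ⟨i, hi⟩ := hP.exists_le_of_sum_mul_le (f := fun i => -f i) (c := -c)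
    (by simpa [Finset.sum_neg_distrib] using h)
  exact ⟨i, neg_le_neg_iff.1 hi⟩

theorem div_sum {f : ι → ℝ} (hf : ∀ i, 0 ≤ f i) (hpos : 0 < ∑ i, f i) :
    IsPMF fun i => f i / ∑ i', f i' :=
  ⟨fun i => div_nonneg (hf i) hpos.le, by rw [← Finset.sum_div, div_self hpos.ne']⟩

theorem sum_lt_one_of_le_midpoint {q₁ q₂ m : ι → ℝ} (hq₁ : IsPMF q₁)
    (hq₂ : IsPMF q₂) (hle : ∀ i, m i ≤ (q₁ i + q₂ i) / 2) (hlt : ∃ i, m i < (q₁ i + q₂ i) / 2) :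
    ∑ i, m i < 1 := by
  obtain ⟨i₀, hi₀⟩ := hlt
  calc ∑ i, m i < ∑ i, (q₁ i + q₂ i) / 2 :=
        Finset.sum_lt_sum (fun i _ => hle i) ⟨i₀, Finset.mem_univ _, hi₀⟩
    _ = 1 := by rw [← Finset.sum_div, Finset.sum_add_distrib, hq₁.2, hq₂.2]; norm_num

theorem mix {P P' : ι → ℝ} (hP : IsPMF P) (hP' : IsPMF P') {t : ℝ} (ht₀ : 0 ≤ t)
    (ht₁ : t ≤ 1) : IsPMF fun i => (1 - t) * P i + t * P' i :=
  convex_stdSimplex ℝ ι hP hP' (by linarith) ht₀ (by ring)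

end IsPMF

theorem isPMF_single [DecidableEq ι] (i : ι) : IsPMF (Pi.single i 1 : ι → ℝ) :=
  single_mem_stdSimplex ℝ i

theorem sum_rpow_mul_rpow_le {α : ℝ} (hα : 0 < α) (hα1 : α < 1) {g h : ι → ℝ}
    (hg : ∀ i, 0 ≤ g i) (hh : ∀ i, 0 ≤ h i) :
    ∑ i, g i ^ α * h i ^ (1 - α) ≤ (∑ i, g i) ^ α * (∑ i, h i) ^ (1 - α) := by
  have := Real.inner_le_Lp_mul_Lq_of_nonneg Finset.univ
    (Real.HolderConjugate.inv_one_sub_inv hα hα1)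
    (f := fun i => g i ^ α) (g := fun i => h i ^ (1 - α))
    (fun i _ => rpow_nonneg (hg i) _) (fun i _ => rpow_nonneg (hh i) _)
  simpa [← rpow_mul (hg _), ← rpow_mul (hh _), hα.ne', (sub_pos.2 hα1).ne'] using this

theorem powerMean_le_arithMean {β a b : ℝ} (hβ : 0 < β) (hβ1 : β < 1) (ha : 0 ≤ a)
    (hb : 0 ≤ b) : ((a ^ β + b ^ β) / 2) ^ β⁻¹ ≤ (a + b) / 2 := by
  have h := (concaveOn_rpow hβ.le hβ1.le).2 (Set.mem_Ici.2 ha) (Set.mem_Ici.2 hb)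
    (by norm_num : (0 : ℝ) ≤ 1 / 2) (by norm_num : (0 : ℝ) ≤ 1 / 2) (by norm_num)
  simp only [smul_eq_mul] at h
  rw [show (1 / 2 : ℝ) * a + 1 / 2 * b = (a + b) / 2 by ring] at h
  calc ((a ^ β + b ^ β) / 2) ^ β⁻¹ ≤ (((a + b) / 2) ^ β) ^ β⁻¹ :=
        rpow_le_rpow (by positivity) (by linarith) (inv_nonneg.2 hβ.le)
    _ = (a + b) / 2 := rpow_rpow_inv (by positivity) hβ.ne'

theorem powerMean_lt_arithMean {β a b : ℝ} (hβ : 0 < β) (hβ1 : β < 1) (ha : 0 ≤ a)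
    (hb : 0 ≤ b) (hab : a ≠ b) : ((a ^ β + b ^ β) / 2) ^ β⁻¹ < (a + b) / 2 := by
  have h := (strictConcaveOn_rpow hβ hβ1).2 (Set.mem_Ici.2 ha) (Set.mem_Ici.2 hb) hab
    (by norm_num : (0 : ℝ) < 1 / 2) (by norm_num : (0 : ℝ) < 1 / 2) (by norm_num)
  simp only [smul_eq_mul] at h
  rw [show (1 / 2 : ℝ) * a + 1 / 2 * b = (a + b) / 2 by ring] at h
  calc ((a ^ β + b ^ β) / 2) ^ β⁻¹ < (((a + b) / 2) ^ β) ^ β⁻¹ :=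
        rpow_lt_rpow (by positivity) (by linarith) (inv_pos.2 hβ)
    _ = (a + b) / 2 := rpow_rpow_inv (by positivity) hβ.ne'

theorem nonneg_of_hasDerivAt_of_isMinOn {f : ℝ → ℝ} {f' a b : ℝ} (hab : a < b)
    (hf : HasDerivAt f f' a) (hmin : IsMinOn f (Icc a b) a) : 0 ≤ f' := by
  have hcone : b - a ∈ posTangentConeAt (Icc a b) a :=
    sub_mem_posTangentConeAt_of_segment_subset (segment_eq_Icc hab.le).subset
  have := hmin.localize.hasFDerivWithinAt_nonneg hf.hasDerivWithinAt.hasFDerivWithinAt hcone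
  simp only [ContinuousLinearMap.toSpanSingleton_apply, smul_eq_mul] at this
  exact nonneg_of_mul_nonneg_right this (sub_pos.2 hab)

theorem sum_rpow_le_sum_rpow_sub_one_mul {p : ℝ} (hp : 1 ≤ p) {b c : ι → ℝ}
    (hb : ∀ i, 0 ≤ b i)
    (hmin : ∀ t ∈ Icc (0 : ℝ) 1, ∑ i, b i ^ p ≤ ∑ i, ((1 - t) * b i + t * c i) ^ p) :
    ∑ i, b i ^ p ≤ ∑ i, b i ^ (p - 1) * c i := by
  have hderiv : HasDerivAt (fun t => ∑ i, ((1 - t) * b i + t * c i) ^ p)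
      (∑ i, (c i - b i) * p * b i ^ (p - 1)) 0 := by
    refine HasDerivAt.fun_sum fun i _ => ?_
    have hline : HasDerivAt (fun t : ℝ => (1 - t) * b i + t * c i) (c i - b i) 0 := by
      have : (fun t : ℝ => (1 - t) * b i + t * c i) = fun t => b i + t * (c i - b i) := by
        funext t; ring
      exact this ▸ (hasDerivAt_mul_const _).const_add _
    simpa using hline.rpow_const (p := p) (Or.inr hp)
  have hnonneg := nonneg_of_hasDerivAt_of_isMinOn zero_lt_one hderiv
    fun t ht => by simpa using hmin t ht
  have hself : ∀ i, b i ^ (p - 1) * b i = b i ^ p := fun i => by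
    rw [← rpow_add_one' (hb i) (by linarith), sub_add_cancel]
  have : ∑ i, (c i - b i) * p * b i ^ (p - 1)
      = p * (∑ i, b i ^ (p - 1) * c i - ∑ i, b i ^ p) := by
    simp only [mul_sub, Finset.mul_sum, ← Finset.sum_sub_distrib, ← hself]
    exact Finset.sum_congr rfl fun i _ => by ring
  rw [this] at hnonneg
  linarith [nonneg_of_mul_nonneg_right hnonneg (by linarith : (0 : ℝ) < p)]

end

section

variable {X Y : Type*} [Fintype Y]

theorem radius_eq_and_existsUnique_of_center {α C : ℝ} {W : X → Y → ℝ} {q : Y → ℝ}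
    (hq : IsPMF q) (hcenter : ∀ x, renyiDivE α (W x) q ≤ ENNReal.ofReal C)
    (hlower : ∀ Q, IsPMF Q → ∃ x, ENNReal.ofReal C ≤ renyiDivE α (W x) Q)
    (huniq : ∀ Q, IsPMF Q → (∀ x, renyiDivE α (W x) Q ≤ ENNReal.ofReal C) → Q = q) :
    (⨅ Q ∈ {Q : Y → ℝ | IsPMF Q}, ⨆ x, renyiDivE α (W x) Q) = ENNReal.ofReal C ∧
    ∃! q : Y → ℝ, IsPMF q ∧ (⨆ x, renyiDivE α (W x) q) = ENNReal.ofReal C := by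
  have hsup : ∀ Q, IsPMF Q → ENNReal.ofReal C ≤ ⨆ x, renyiDivE α (W x) Q := fun Q hQ =>
    let ⟨x, hx⟩ := hlower Q hQ
    hx.trans (le_iSup (fun x => renyiDivE α (W x) Q) x)
  have hq_sup : (⨆ x, renyiDivE α (W x) q) = ENNReal.ofReal C :=
    le_antisymm (iSup_le hcenter) (hsup q hq)
  refine ⟨le_antisymm (iInf₂_le_of_le q hq hq_sup.le) (le_iInf₂ hsup), q, ⟨hq, hq_sup⟩,
    ?_⟩
  rintro Q ⟨hQ, hQ_sup⟩
  exact huniq Q hQ fun x => (le_iSup (fun x => renyiDivE α (W x) Q) x).trans hQ_sup.le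

variable [Fintype X]

theorem renyiCap_eq_of_isMaxOn {α : ℝ} {W : X → Y → ℝ} {P : X → ℝ} (hP : IsPMF P)
    (hmax : IsMaxOn (fun P => renyiInfo α P W) (stdSimplex ℝ X) P) :
    renyiCap α W = renyiInfo α P W :=
  IsGreatest.csSup_eq ⟨⟨P, hP, rfl⟩, by rintro _ ⟨P', hP', rfl⟩; exact hmax hP'⟩

section OrderLtOne

variable {α : ℝ}

noncomputable def renyiAffinity (α : ℝ) (V Q : Y → ℝ) : ℝ :=
  ∑ y, V y ^ α * Q y ^ (1 - α)

noncomputable def renyiMeanMass (α : ℝ) (P : X → ℝ) (W : X → Y → ℝ) : ℝ :=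
  ∑ y, (∑ x, P x * W x y ^ α) ^ α⁻¹

theorem renyiInfo_of_ne_one (hα : α ≠ 1) (P : X → ℝ) (W : X → Y → ℝ) :
    renyiInfo α P W = α / (α - 1) * log (renyiMeanMass α P W) :=
  if_neg hα

theorem renyiDivE_of_ne_one (hα : α ≠ 1) (V Q : Y → ℝ) :
    renyiDivE α V Q = if 0 < renyiAffinity α V Q
      then ENNReal.ofReal ((α - 1)⁻¹ * log (renyiAffinity α V Q)) else ⊤ := by
  simp only [renyiDivE, renyiDiv, hα, if_false]
  rfl

theorem renyiDivE_le_ofReal_iff_le_renyiAffinity (hα1 : α < 1) {c : ℝ} (hc : 0 < c)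
    (hc1 : c ≤ 1) {V Q : Y → ℝ} :
    renyiDivE α V Q ≤ ENNReal.ofReal ((α - 1)⁻¹ * log c) ↔ c ≤ renyiAffinity α V Q := by
  have hneg : (α - 1)⁻¹ < 0 := inv_lt_zero.2 (by linarith)
  rw [renyiDivE_of_ne_one hα1.ne]
  split_ifs with hA
  · rw [ENNReal.ofReal_le_ofReal_iff
      (mul_nonneg_of_nonpos_of_nonpos hneg.le (log_nonpos hc.le hc1)),
      mul_le_mul_left_of_neg hneg, log_le_log_iff hc hA]
  · simp only [top_le_iff, ENNReal.ofReal_ne_top, false_iff, not_le]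
    linarith [not_lt.1 hA]

theorem ofReal_le_renyiDivE_of_renyiAffinity_le (hα1 : α < 1) {c : ℝ} {V Q : Y → ℝ}
    (h : renyiAffinity α V Q ≤ c) :
    ENNReal.ofReal ((α - 1)⁻¹ * log c) ≤ renyiDivE α V Q := by
  rw [renyiDivE_of_ne_one hα1.ne]
  split_ifs with hA
  · exact ENNReal.ofReal_le_ofReal
      (mul_le_mul_of_nonpos_left (log_le_log hA h) (inv_nonpos.2 (by linarith)))
  · exact le_top

theorem renyiMean_apply (P : X → ℝ) (W : X → Y → ℝ) (y : Y) :
    renyiMean α P W y = (∑ x, P x * W x y ^ α) ^ α⁻¹ / renyiMeanMass α P W :=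
  rfl

theorem sum_mul_rpow_nonneg {P w : X → ℝ} (hP : ∀ x, 0 ≤ P x) (hw : ∀ x, 0 ≤ w x) :
    0 ≤ ∑ x, P x * w x ^ α :=
  Finset.sum_nonneg fun x _ => mul_nonneg (hP x) (rpow_nonneg (hw x) α)

theorem renyiMeanMass_pos {W : X → Y → ℝ} (hW : ∀ x, IsPMF (W x)) {P : X → ℝ}
    (hP : IsPMF P) : 0 < renyiMeanMass α P W := by
  obtain ⟨x, hx⟩ := hP.exists_pos
  obtain ⟨y, hy⟩ := (hW x).exists_pos
  have hB : 0 < ∑ x', P x' * W x' y ^ α :=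
    (mul_pos hx (rpow_pos_of_pos hy α)).trans_le <|
      Finset.single_le_sum (f := fun x' => P x' * W x' y ^ α)
        (fun x' _ => mul_nonneg (hP.1 x') (rpow_nonneg ((hW x').1 y) α)) (Finset.mem_univ x)
  exact (rpow_pos_of_pos hB _).trans_le <|
    Finset.single_le_sum (f := fun y => (∑ x', P x' * W x' y ^ α) ^ α⁻¹)
      (fun y _ => rpow_nonneg (sum_mul_rpow_nonneg hP.1 fun x => (hW x).1 y) _)
      (Finset.mem_univ y)

theorem isPMF_renyiMean {W : X → Y → ℝ} (hW : ∀ x, IsPMF (W x)) {P : X → ℝ}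
    (hP : IsPMF P) : IsPMF (renyiMean α P W) :=
  IsPMF.div_sum (fun y => rpow_nonneg (sum_mul_rpow_nonneg hP.1 fun x => (hW x).1 y) _)
    (renyiMeanMass_pos hW hP)

theorem renyiMeanMass_single [DecidableEq X] (hα : α ≠ 0) {W : X → Y → ℝ}
    (hW : ∀ x, IsPMF (W x)) (x : X) : renyiMeanMass α (Pi.single x 1) W = 1 := by
  simp [renyiMeanMass, Pi.single_apply, rpow_rpow_inv ((hW x).1 _) hα, (hW x).2]

theorem continuous_renyiMeanMass (hα : 0 < α) (W : X → Y → ℝ) :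
    Continuous fun P : X → ℝ => renyiMeanMass α P W :=
  continuous_finsetSum _ fun _ _ =>
    (continuous_finsetSum _ fun x _ => (continuous_apply x).mul continuous_const).rpow_const
      fun _ => Or.inr (inv_nonneg.2 hα.le)

theorem isMaxOn_renyiInfo_of_isMinOn (hα : 0 < α) (hα1 : α < 1) {W : X → Y → ℝ}
    (hW : ∀ x, IsPMF (W x)) {P : X → ℝ} (hP : IsPMF P)
    (hmin : IsMinOn (fun P => renyiMeanMass α P W) (stdSimplex ℝ X) P) :
    IsMaxOn (fun P => renyiInfo α P W) (stdSimplex ℝ X) P := fun P' hP' => by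
  change renyiInfo α P' W ≤ renyiInfo α P W
  rw [renyiInfo_of_ne_one hα1.ne, renyiInfo_of_ne_one hα1.ne]
  exact mul_le_mul_of_nonpos_left (log_le_log (renyiMeanMass_pos hW hP) (hmin hP'))
    (div_nonpos_of_nonneg_of_nonpos hα.le (by linarith))

theorem sum_mul_renyiAffinity_le (hα : 0 < α) (hα1 : α < 1) {W : X → Y → ℝ}
    (hW : ∀ x y, 0 ≤ W x y) {P : X → ℝ} (hP : ∀ x, 0 ≤ P x) {Q : Y → ℝ}
    (hQ : IsPMF Q) : ∑ x, P x * renyiAffinity α (W x) Q ≤ renyiMeanMass α P W ^ α := by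
  have hB (y : Y) : 0 ≤ ∑ x, P x * W x y ^ α := sum_mul_rpow_nonneg hP fun x => hW x y
  calc ∑ x, P x * renyiAffinity α (W x) Q
      = ∑ y, ((∑ x, P x * W x y ^ α) ^ α⁻¹) ^ α * Q y ^ (1 - α) := by
        simp only [renyiAffinity, Finset.mul_sum, rpow_inv_rpow (hB _) hα.ne', Finset.sum_mul]
        rw [Finset.sum_comm]
        simp only [mul_assoc]
    _ ≤ renyiMeanMass α P W ^ α := by
        simpa [renyiMeanMass, hQ.2] using
          sum_rpow_mul_rpow_le hα hα1 (fun y => rpow_nonneg (hB y) _) hQ.1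

theorem renyiMeanMass_le_of_isMinOn (hα : 0 < α) (hα1 : α ≤ 1) {W : X → Y → ℝ}
    (hW : ∀ x y, 0 ≤ W x y) {P : X → ℝ} (hP : IsPMF P)
    (hmin : IsMinOn (fun P => renyiMeanMass α P W) (stdSimplex ℝ X) P) (x : X) :
    renyiMeanMass α P W ≤ ∑ y, (∑ x', P x' * W x' y ^ α) ^ (α⁻¹ - 1) * W x y ^ α := by
  classical
  refine sum_rpow_le_sum_rpow_sub_one_mul ((one_le_inv₀ hα).2 hα1)
    (fun y => sum_mul_rpow_nonneg hP.1 fun x' => hW x' y) fun t ht => ?_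
  have := hmin (hP.mix (isPMF_single x) ht.1 ht.2)
  simpa [renyiMeanMass, add_mul, Finset.sum_add_distrib, Finset.mul_sum, mul_assoc,
    Pi.single_apply] using this

theorem renyiAffinity_renyiMean (hα : α ≠ 0) {W : X → Y → ℝ} (hW : ∀ x y, 0 ≤ W x y)
    {P : X → ℝ} (hP : ∀ x, 0 ≤ P x) (V : Y → ℝ) :
    renyiAffinity α V (renyiMean α P W)
      = (∑ y, (∑ x, P x * W x y ^ α) ^ (α⁻¹ - 1) * V y ^ α)
        / renyiMeanMass α P W ^ (1 - α) := by
  have hB (y : Y) : 0 ≤ ∑ x, P x * W x y ^ α := sum_mul_rpow_nonneg hP fun x => hW x y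
  have hT : 0 ≤ renyiMeanMass α P W := Finset.sum_nonneg fun y _ => rpow_nonneg (hB y) _
  simp only [renyiAffinity, renyiMean_apply, Finset.sum_div]
  refine Finset.sum_congr rfl fun y _ => ?_
  rw [div_rpow (rpow_nonneg (hB y) _) hT, ← rpow_mul (hB y),
    show α⁻¹ * (1 - α) = α⁻¹ - 1 by field_simp]
  ring

theorem rpow_renyiMeanMass_le_renyiAffinity_of_isMinOn (hα : 0 < α) (hα1 : α ≤ 1)
    {W : X → Y → ℝ} (hW : ∀ x, IsPMF (W x)) {P : X → ℝ} (hP : IsPMF P)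
    (hmin : IsMinOn (fun P => renyiMeanMass α P W) (stdSimplex ℝ X) P) (x : X) :
    renyiMeanMass α P W ^ α ≤ renyiAffinity α (W x) (renyiMean α P W) := by
  have hT := renyiMeanMass_pos (α := α) hW hP
  rw [renyiAffinity_renyiMean hα.ne' (fun x => (hW x).1) hP.1,
    le_div_iff₀ (rpow_pos_of_pos hT _), ← rpow_add hT, add_sub_cancel, rpow_one]
  exact renyiMeanMass_le_of_isMinOn hα hα1 (fun x => (hW x).1) hP hmin x

theorem exists_renyiAffinity_eq_mul_midpoint (hα : 0 < α) (hα1 : α < 1) {q₁ q₂ : Y → ℝ}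
    (hq₁ : IsPMF q₁) (hq₂ : IsPMF q₂) (hne : q₁ ≠ q₂) :
    ∃ Q, IsPMF Q ∧ ∃ r > 1, ∀ V : Y → ℝ,
      renyiAffinity α V Q = r * ((renyiAffinity α V q₁ + renyiAffinity α V q₂) / 2) := by
  have hβ : 0 < 1 - α := by linarith
  have hβ1 : 1 - α < 1 := by linarith
  set m : Y → ℝ := fun y => ((q₁ y ^ (1 - α) + q₂ y ^ (1 - α)) / 2) ^ (1 - α)⁻¹
  have hmean : ∀ y, 0 ≤ (q₁ y ^ (1 - α) + q₂ y ^ (1 - α)) / 2 := fun y => by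
    have := rpow_nonneg (hq₁.1 y) (1 - α); have := rpow_nonneg (hq₂.1 y) (1 - α)
    positivity
  have hm : ∀ y, 0 ≤ m y := fun y => rpow_nonneg (hmean y) _
  obtain ⟨y₀, hy₀⟩ := Function.ne_iff.1 hne
  have hZ1 : ∑ y, m y < 1 := hq₁.sum_lt_one_of_le_midpoint hq₂
    (fun y => powerMean_le_arithMean hβ hβ1 (hq₁.1 y) (hq₂.1 y))
    ⟨y₀, powerMean_lt_arithMean hβ hβ1 (hq₁.1 y₀) (hq₂.1 y₀) hy₀⟩
  have hZ0 : 0 < ∑ y, m y := by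
    obtain ⟨y, hy⟩ := hq₁.exists_pos
    have : 0 < m y := rpow_pos_of_pos (by
      have := rpow_pos_of_pos hy (1 - α); have := rpow_nonneg (hq₂.1 y) (1 - α)
      positivity) _
    exact this.trans_le (Finset.single_le_sum (fun y _ => hm y) (Finset.mem_univ y))
  refine ⟨_, IsPMF.div_sum hm hZ0, ((∑ y, m y) ^ (1 - α))⁻¹,
    (one_lt_inv₀ (rpow_pos_of_pos hZ0 _)).2 (rpow_lt_one hZ0.le hZ1 hβ), fun V => ?_⟩
  simp only [renyiAffinity, div_rpow (hm _) hZ0.le, m, rpow_inv_rpow (hmean _) hβ.ne',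
    Finset.mul_sum, ← Finset.sum_add_distrib, Finset.sum_div]
  refine Finset.sum_congr rfl fun y _ => ?_
  ring

theorem eq_of_rpow_renyiMeanMass_le_renyiAffinity (hα : 0 < α) (hα1 : α < 1)
    {W : X → Y → ℝ} (hW : ∀ x, IsPMF (W x)) {P : X → ℝ} (hP : IsPMF P)
    {q₁ q₂ : Y → ℝ} (hq₁ : IsPMF q₁) (hq₂ : IsPMF q₂)
    (h₁ : ∀ x, renyiMeanMass α P W ^ α ≤ renyiAffinity α (W x) q₁)
    (h₂ : ∀ x, renyiMeanMass α P W ^ α ≤ renyiAffinity α (W x) q₂) : q₁ = q₂ := by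
  by_contra hne
  obtain ⟨Q, hQ, r, hr, hQaff⟩ := exists_renyiAffinity_eq_mul_midpoint hα hα1 hq₁ hq₂ hne
  obtain ⟨x, hx⟩ := hP.exists_le_of_sum_mul_le
    (sum_mul_renyiAffinity_le hα hα1 (fun x => (hW x).1) hP.1 hQ)
  have hT := rpow_pos_of_pos (renyiMeanMass_pos (α := α) hW hP) α
  rw [hQaff] at hx
  nlinarith [h₁ x, h₂ x]

theorem radius_eq_and_existsUnique_of_lt_one [Nonempty X] (hα : 0 < α) (hα1 : α < 1)
    {W : X → Y → ℝ} (hW : ∀ x, IsPMF (W x)) :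
    (⨅ Q ∈ {Q : Y → ℝ | IsPMF Q}, ⨆ x, renyiDivE α (W x) Q)
      = ENNReal.ofReal (renyiCap α W) ∧
    ∃! q : Y → ℝ, IsPMF q ∧
      (⨆ x, renyiDivE α (W x) q) = ENNReal.ofReal (renyiCap α W) := by
  classical
  obtain ⟨P, (hP : IsPMF P), hmin⟩ := (isCompact_stdSimplex ℝ X).exists_isMinOn
    ⟨_, isPMF_single (Classical.arbitrary X)⟩ (continuous_renyiMeanMass hα W).continuousOn
  set T := renyiMeanMass α P W
  have hT : 0 < T ^ α := rpow_pos_of_pos (renyiMeanMass_pos hW hP) α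
  have hT1 : T ^ α ≤ 1 := rpow_le_one (renyiMeanMass_pos hW hP).le
    (renyiMeanMass_single hα.ne' hW (Classical.arbitrary X) ▸
      hmin (isPMF_single (Classical.arbitrary X))) hα.le
  have hcap : renyiCap α W = (α - 1)⁻¹ * log (T ^ α) := by
    rw [renyiCap_eq_of_isMaxOn hP (isMaxOn_renyiInfo_of_isMinOn hα hα1 hW hP hmin),
      renyiInfo_of_ne_one hα1.ne, log_rpow (renyiMeanMass_pos hW hP)]
    ring
  have hcenter := rpow_renyiMeanMass_le_renyiAffinity_of_isMinOn hα hα1.le hW hP hmin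
  rw [hcap]
  refine radius_eq_and_existsUnique_of_center (isPMF_renyiMean hW hP)
    (fun x => (renyiDivE_le_ofReal_iff_le_renyiAffinity hα1 hT hT1).2 (hcenter x))
    (fun Q hQ => ?_) fun Q hQ hQc => ?_
  · obtain ⟨x, hx⟩ := hP.exists_le_of_sum_mul_le
      (sum_mul_renyiAffinity_le hα hα1 (fun x => (hW x).1) hP.1 hQ)
    exact ⟨x, ofReal_le_renyiDivE_of_renyiAffinity_le hα1 hx⟩
  · exact eq_of_rpow_renyiMeanMass_le_renyiAffinity hα hα1 hW hP hQ (isPMF_renyiMean hW hP)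
      (fun x => (renyiDivE_le_ofReal_iff_le_renyiAffinity hα1 hT hT1).1 (hQc x)) hcenter

end OrderLtOne

section OrderOne

theorem renyiDiv_one (V Q : Y → ℝ) : renyiDiv 1 V Q = ∑ y, V y * log (V y / Q y) :=
  if_pos rfl

theorem renyiDivE_one_le_ofReal_iff {C : ℝ} (hC : 0 ≤ C) {V Q : Y → ℝ} :
    renyiDivE 1 V Q ≤ ENNReal.ofReal C ↔
      (∀ y, Q y = 0 → V y = 0) ∧ renyiDiv 1 V Q ≤ C := by
  rw [renyiDivE, if_pos rfl]
  split_ifs with hac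
  · rw [ENNReal.ofReal_le_ofReal_iff hC]
    exact ⟨fun h => ⟨hac, h⟩, And.right⟩
  · simp [hac]

theorem ofReal_le_renyiDivE_one {C : ℝ} {V Q : Y → ℝ}
    (h : (∀ y, Q y = 0 → V y = 0) → C ≤ renyiDiv 1 V Q) :
    ENNReal.ofReal C ≤ renyiDivE 1 V Q := by
  rw [renyiDivE, if_pos rfl]
  split_ifs with hac
  · exact ENNReal.ofReal_le_ofReal (h hac)
  · exact le_top

theorem sub_le_mul_log_div {a b : ℝ} (ha : 0 ≤ a) (hb : 0 ≤ b) (hab : b = 0 → a = 0) :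
    a - b ≤ a * log (a / b) := by
  rcases ha.eq_or_lt with rfl | ha
  · simpa using hb
  have hb : 0 < b := hb.lt_of_ne fun h => ha.ne' (hab h.symm)
  have hlog := log_le_sub_one_of_pos (div_pos hb ha)
  have hneg : log (a / b) = -log (b / a) := by rw [← log_inv, inv_div]
  calc a - b = a * (1 - b / a) := by field_simp
    _ ≤ a * log (a / b) := mul_le_mul_of_nonneg_left (by linarith) ha.le

theorem renyiDiv_one_nonneg {V Q : Y → ℝ} (hV : IsPMF V) (hQ : IsPMF Q)
    (hac : ∀ y, Q y = 0 → V y = 0) : 0 ≤ renyiDiv 1 V Q := by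
  calc (0 : ℝ) = ∑ y, (V y - Q y) := by rw [Finset.sum_sub_distrib, hV.2, hQ.2, sub_self]
    _ ≤ renyiDiv 1 V Q := by
      rw [renyiDiv_one]
      exact Finset.sum_le_sum fun y _ => sub_le_mul_log_div (hV.1 y) (hQ.1 y) (hac y)

theorem renyiInfo_one (P : X → ℝ) (W : X → Y → ℝ) :
    renyiInfo 1 P W = ∑ x, P x * renyiDiv 1 (W x) fun y => ∑ x', P x' * W x' y := by
  simp [renyiInfo, renyiDiv_one]

theorem sum_mul_renyiDiv_one {W : X → Y → ℝ} (hW : ∀ x y, 0 ≤ W x y) {P : X → ℝ}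
    (hP : ∀ x, 0 ≤ P x) {Q : Y → ℝ} (hac : ∀ y, Q y = 0 → ∑ x, P x * W x y = 0) :
    ∑ x, P x * renyiDiv 1 (W x) Q
      = renyiInfo 1 P W + renyiDiv 1 (fun y => ∑ x, P x * W x y) Q := by
  have hpt : ∀ x y, P x * (W x y * log (W x y / Q y))
      = P x * (W x y * log (W x y / ∑ x', P x' * W x' y))
        + P x * W x y * log ((∑ x', P x' * W x' y) / Q y) := fun x y => by
    rcases (hP x).eq_or_lt with h | hPx
    · simp [← h]
    rcases (hW x y).eq_or_lt with h | hWxy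
    · simp [← h]
    have hPW : 0 < ∑ x', P x' * W x' y := (mul_pos hPx hWxy).trans_le <|
      Finset.single_le_sum (f := fun x' => P x' * W x' y)
        (fun x' _ => mul_nonneg (hP x') (hW x' y)) (Finset.mem_univ x)
    have hQ : Q y ≠ 0 := fun h => hPW.ne' (hac y h)
    rw [log_div hWxy.ne' hQ, log_div hWxy.ne' hPW.ne', log_div hPW.ne' hQ]
    ring
  simp only [renyiInfo_one, renyiDiv_one, Finset.mul_sum, hpt, Finset.sum_add_distrib,
    Finset.sum_mul]
  rw [Finset.sum_comm (f := fun x y => P x * W x y * _)]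

theorem renyiInfo_one_single [DecidableEq X] {W : X → Y → ℝ} (x : X) :
    renyiInfo 1 (Pi.single x 1) W = 0 := by
  refine (renyiInfo_one _ _).trans (Finset.sum_eq_zero fun x' _ => ?_)
  rcases eq_or_ne x' x with rfl | hx'
  · simp only [Pi.single_apply, ite_mul, one_mul, zero_mul, Finset.sum_ite_eq', Finset.mem_univ,
      if_true, renyiDiv_one]
    refine Finset.sum_eq_zero fun y _ => ?_
    rcases eq_or_ne (W x' y) 0 with h | h <;> simp [h]
  · simp [hx']

theorem continuousOn_renyiInfo_one {W : X → Y → ℝ} (hW : ∀ x y, 0 ≤ W x y) :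
    ContinuousOn (fun P => renyiInfo 1 P W) (stdSimplex ℝ X) := by
  -- With `Q ≡ 1` the golden formula writes `I(P;W)` as a difference of continuous functions.
  refine ContinuousOn.congr (f := fun P => ∑ x, P x * renyiDiv 1 (W x) (fun _ => 1)
      - renyiDiv 1 (fun y => ∑ x, P x * W x y) (fun _ => 1)) ?_ fun P hP => ?_
  · simp only [renyiDiv_one, div_one]
    refine Continuous.continuousOn ((continuous_finsetSum _ fun x _ =>
      (continuous_apply x).mul continuous_const).sub (continuous_finsetSum _ fun y _ => ?_))
    exact continuous_mul_log.comp
      (continuous_finsetSum _ fun x _ => (continuous_apply x).mul continuous_const)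
  · have := sum_mul_renyiDiv_one hW hP.1 (Q := fun _ => 1) fun y h => absurd h one_ne_zero
    simp only [this]
    ring

theorem IsPMF.sum_mul {P : X → ℝ} (hP : IsPMF P) {W : X → Y → ℝ}
    (hW : ∀ x, IsPMF (W x)) :
    IsPMF fun y => ∑ x, P x * W x y := by
  refine ⟨fun y => Finset.sum_nonneg fun x _ => mul_nonneg (hP.1 x) ((hW x).1 y), ?_⟩
  rw [Finset.sum_comm]
  simp [← Finset.mul_sum, (hW _).2, hP.2]

theorem exists_renyiInfo_one_le_renyiDiv_one {W : X → Y → ℝ} (hW : ∀ x, IsPMF (W x))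
    {P : X → ℝ} (hP : IsPMF P) {Q : Y → ℝ} (hQ : IsPMF Q)
    (hac : ∀ x y, Q y = 0 → W x y = 0) : ∃ x, renyiInfo 1 P W ≤ renyiDiv 1 (W x) Q := by
  have hacP : ∀ y, Q y = 0 → ∑ x, P x * W x y = 0 := fun y hy =>
    Finset.sum_eq_zero fun x _ => by rw [hac x y hy, mul_zero]
  refine hP.exists_le_of_le_sum_mul ?_
  rw [sum_mul_renyiDiv_one (fun x => (hW x).1) hP.1 hacP]
  linarith [renyiDiv_one_nonneg (hP.sum_mul hW) hQ hacP]

theorem renyiDiv_one_mix_le_of_isMaxOn {W : X → Y → ℝ} (hW : ∀ x, IsPMF (W x))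
    {P : X → ℝ} (hP : IsPMF P) (hmax : IsMaxOn (fun P => renyiInfo 1 P W) (stdSimplex ℝ X) P)
    (x : X) {t : ℝ} (ht : t ∈ Ioo (0 : ℝ) 1) :
    renyiDiv 1 (W x) (fun y => (1 - t) * ∑ x', P x' * W x' y + t * W x y)
      ≤ renyiInfo 1 P W := by
  classical
  set Q : Y → ℝ := fun y => (1 - t) * ∑ x', P x' * W x' y + t * W x y
  set Pt : X → ℝ := fun x' => (1 - t) * P x' + t * (Pi.single x 1 : X → ℝ) x'
  have hQ : IsPMF Q := (hP.sum_mul hW).mix (hW x) ht.1.le ht.2.le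
  have hPt : IsPMF Pt := hP.mix (isPMF_single x) ht.1.le ht.2.le
  have hout : (fun y => ∑ x', Pt x' * W x' y) = Q := by
    funext y
    simp [Pt, Q, add_mul, Finset.sum_add_distrib, Finset.mul_sum, mul_assoc, Pi.single_apply]
  have hIt : renyiInfo 1 Pt W
      = (1 - t) * ∑ x', P x' * renyiDiv 1 (W x') Q + t * renyiDiv 1 (W x) Q := by
    rw [renyiInfo_one, hout]
    simp [Pt, add_mul, Finset.sum_add_distrib, Finset.mul_sum, mul_assoc, Pi.single_apply]
  have hacP : ∀ y, Q y = 0 → ∑ x', P x' * W x' y = 0 := fun y hy => by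
    have h₁ := mul_nonneg (sub_nonneg.2 ht.2.le) ((hP.sum_mul hW).1 y)
    have h₂ := mul_nonneg ht.1.le ((hW x).1 y)
    have : (1 - t) * ∑ x', P x' * W x' y = 0 := by linarith [show Q y = 0 from hy]
    exact (mul_eq_zero.1 this).resolve_left (by linarith [ht.2])
  have hgolden : renyiInfo 1 P W ≤ ∑ x', P x' * renyiDiv 1 (W x') Q := by
    rw [sum_mul_renyiDiv_one (fun x => (hW x).1) hP.1 hacP]
    linarith [renyiDiv_one_nonneg (hP.sum_mul hW) hQ hacP]
  have hle : renyiInfo 1 Pt W ≤ renyiInfo 1 P W := hmax hPt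
  rw [hIt] at hle
  have := mul_le_mul_of_nonneg_left hgolden (sub_nonneg.2 ht.2.le)
  exact le_of_mul_le_mul_left (by linarith) ht.1

theorem sum_mul_log_sub_le_renyiDiv_one {V R : Y → ℝ} (hV : IsPMF V) (hR : IsPMF R)
    (hac : ∀ y, R y = 0 → V y = 0) (y₀ : Y) :
    ∑ y, V y * log (V y) - V y₀ * log (R y₀) ≤ renyiDiv 1 V R := by
  have hpt : ∀ y, V y * log (V y / R y) = V y * log (V y) + V y * -log (R y) := fun y => by
    rcases (hV.1 y).eq_or_lt with h | hVy
    · simp [← h]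
    have hRy : R y ≠ 0 := fun h => hVy.ne' (hac y h)
    rw [log_div hVy.ne' hRy]
    ring
  have hcross : ∀ y, 0 ≤ V y * -log (R y) := fun y =>
    mul_nonneg (hV.1 y) (neg_nonneg.2 (log_nonpos (hR.1 y) (hR.le_one y)))
  rw [renyiDiv_one, Finset.sum_congr rfl fun y _ => hpt y, Finset.sum_add_distrib]
  linarith [Finset.single_le_sum (fun y _ => hcross y) (Finset.mem_univ y₀)]

theorem absCont_of_forall_renyiDiv_one_mix_le {V Q : Y → ℝ} (hV : IsPMF V) (hQ : IsPMF Q)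
    {C : ℝ}
    (h : ∀ t ∈ Ioo (0 : ℝ) 1, renyiDiv 1 V (fun y => (1 - t) * Q y + t * V y) ≤ C) :
    ∀ y, Q y = 0 → V y = 0 := by
  intro y₀ hQy₀
  by_contra hVy₀
  have hV₀ : 0 < V y₀ := (hV.1 y₀).lt_of_ne (Ne.symm hVy₀)
  set K := ∑ y, V y * log (V y)
  obtain ⟨t, htlog, ht⟩ : ∃ t, log t < (K - C) / V y₀ ∧ t ∈ Ioo (0 : ℝ) 1 :=
    ((tendsto_log_nhdsGT_zero.eventually_lt_atBot _).and (Ioo_mem_nhdsGT one_pos)).exists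
  have hmix := hQ.mix hV ht.1.le ht.2.le
  have hac : ∀ y, (1 - t) * Q y + t * V y = 0 → V y = 0 := fun y hy => by
    have := mul_nonneg (sub_nonneg.2 ht.2.le) (hQ.1 y)
    have : t * V y = 0 := by linarith [mul_nonneg ht.1.le (hV.1 y)]
    exact (mul_eq_zero.1 this).resolve_left ht.1.ne'
  -- The summand at `y₀` is `-V y₀ * log (t * V y₀)`, which exceeds any bound as `t → 0⁺`.
  have hlow := sum_mul_log_sub_le_renyiDiv_one hV hmix hac y₀
  simp only [hQy₀, mul_zero, zero_add] at hlow
  rw [log_mul ht.1.ne' hV₀.ne'] at hlow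
  have hlogV := mul_nonpos_of_nonneg_of_nonpos hV₀.le (log_nonpos hV₀.le (hV.le_one y₀))
  have := (lt_div_iff₀ hV₀).1 htlog
  linarith [h t ht]

theorem continuousAt_renyiDiv_one_mix {V Q R : Y → ℝ} (hac : ∀ y, Q y = 0 → V y = 0) :
    ContinuousAt (fun t => renyiDiv 1 V fun y => (1 - t) * Q y + t * R y) 0 := by
  simp only [renyiDiv_one]
  refine tendsto_finsetSum _ fun y _ => ?_
  by_cases hV : V y = 0
  · simp only [hV, zero_mul]
    exact continuousAt_const
  have hQ : Q y ≠ 0 := fun h => hV (hac y h)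
  exact continuousAt_const.mul ((continuousAt_const.div (by fun_prop) (by simpa using hQ)).log
    (by simpa using div_ne_zero hV hQ))

theorem renyiDivE_one_le_of_forall_mix_le {V Q : Y → ℝ} (hV : IsPMF V) (hQ : IsPMF Q) {C : ℝ}
    (hC : 0 ≤ C)
    (h : ∀ t ∈ Ioo (0 : ℝ) 1, renyiDiv 1 V (fun y => (1 - t) * Q y + t * V y) ≤ C) :
    renyiDivE 1 V Q ≤ ENNReal.ofReal C := by
  have hac := absCont_of_forall_renyiDiv_one_mix_le hV hQ h
  have hlim := (continuousAt_renyiDiv_one_mix (R := V) hac).tendsto.mono_left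
    (nhdsWithin_le_nhds (s := Ioi 0))
  simp only [sub_zero, one_mul, zero_mul, add_zero] at hlim
  refine (renyiDivE_one_le_ofReal_iff hC).2 ⟨hac, le_of_tendsto hlim ?_⟩
  filter_upwards [Ioo_mem_nhdsGT one_pos] with t ht using h t ht

theorem exists_renyiDiv_one_eq_midpoint_add {q₁ q₂ : Y → ℝ} (hq₁ : IsPMF q₁)
    (hq₂ : IsPMF q₂) (hne : q₁ ≠ q₂) (hcommon : ∃ y, 0 < q₁ y ∧ 0 < q₂ y) :
    ∃ Q, IsPMF Q ∧ ∃ c < 0, ∀ V : Y → ℝ, IsPMF V →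
      (∀ y, q₁ y = 0 → V y = 0) → (∀ y, q₂ y = 0 → V y = 0) →
      (∀ y, Q y = 0 → V y = 0) ∧
        renyiDiv 1 V Q = (renyiDiv 1 V q₁ + renyiDiv 1 V q₂) / 2 + c := by
  set m : Y → ℝ := fun y => q₁ y ^ (1 / 2 : ℝ) * q₂ y ^ (1 / 2 : ℝ)
  have hm : ∀ y, 0 ≤ m y := fun y =>
    mul_nonneg (rpow_nonneg (hq₁.1 y) _) (rpow_nonneg (hq₂.1 y) _)
  have hAMGM : ∀ y, 1 / 2 * q₁ y + 1 / 2 * q₂ y = (q₁ y + q₂ y) / 2 := fun y => by ring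
  obtain ⟨y₀, hy₀⟩ := Function.ne_iff.1 hne
  have hZ1 : ∑ y, m y < 1 := hq₁.sum_lt_one_of_le_midpoint hq₂
    (fun y => hAMGM y ▸ geom_mean_le_arith_mean2_weighted (by norm_num) (by norm_num)
      (hq₁.1 y) (hq₂.1 y) (by norm_num))
    ⟨y₀, hAMGM y₀ ▸ (geom_mean_lt_arith_mean2_weighted_iff_of_pos (by norm_num)
      (by norm_num) (hq₁.1 y₀) (hq₂.1 y₀) (by norm_num)).2 hy₀⟩
  have hZ0 : 0 < ∑ y, m y := by
    obtain ⟨y, hy₁, hy₂⟩ := hcommon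
    exact (by positivity : 0 < m y).trans_le
      (Finset.single_le_sum (fun y _ => hm y) (Finset.mem_univ y))
  refine ⟨_, IsPMF.div_sum hm hZ0, log (∑ y, m y), log_neg hZ0 hZ1, fun V hV h₁ h₂ => ?_⟩
  have hpos : ∀ y, V y ≠ 0 → 0 < q₁ y ∧ 0 < q₂ y := fun y hVy =>
    ⟨(hq₁.1 y).lt_of_ne fun h => hVy (h₁ y h.symm),
      (hq₂.1 y).lt_of_ne fun h => hVy (h₂ y h.symm)⟩
  refine ⟨fun y hy => by_contra fun hVy => ?_, ?_⟩
  · obtain ⟨hq₁y, hq₂y⟩ := hpos y hVy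
    exact (div_pos (by positivity : 0 < m y) hZ0).ne' hy
  have hpt : ∀ y, V y * log (V y / (m y / ∑ y', m y'))
      = (V y * log (V y / q₁ y) + V y * log (V y / q₂ y)) / 2 + V y * log (∑ y', m y') :=
    fun y => by
    by_cases hVy : V y = 0
    · simp [hVy]
    obtain ⟨hq₁y, hq₂y⟩ := hpos y hVy
    have hVy := (hV.1 y).lt_of_ne (Ne.symm hVy)
    rw [div_div_eq_mul_div, log_div (by positivity) (by positivity), log_mul hVy.ne' hZ0.ne',
      log_mul (by positivity) (by positivity), log_rpow hq₁y, log_rpow hq₂y,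
      log_div hVy.ne' hq₁y.ne', log_div hVy.ne' hq₂y.ne']
    ring
  simp only [renyiDiv_one, hpt, Finset.sum_add_distrib, ← Finset.sum_div, ← Finset.sum_mul,
    hV.2, one_mul]

theorem eq_of_renyiDiv_one_le [Nonempty X] {W : X → Y → ℝ} (hW : ∀ x, IsPMF (W x))
    {P : X → ℝ} (hP : IsPMF P) {q₁ q₂ : Y → ℝ} (hq₁ : IsPMF q₁) (hq₂ : IsPMF q₂)
    (h₁ : ∀ x, (∀ y, q₁ y = 0 → W x y = 0) ∧ renyiDiv 1 (W x) q₁ ≤ renyiInfo 1 P W)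
    (h₂ : ∀ x, (∀ y, q₂ y = 0 → W x y = 0) ∧ renyiDiv 1 (W x) q₂ ≤ renyiInfo 1 P W) :
    q₁ = q₂ := by
  by_contra hne
  have hcommon : ∃ y, 0 < q₁ y ∧ 0 < q₂ y := by
    obtain ⟨y, hy⟩ := (hW (Classical.arbitrary X)).exists_pos
    exact ⟨y, (hq₁.1 y).lt_of_ne fun h => hy.ne' ((h₁ _).1 y h.symm),
      (hq₂.1 y).lt_of_ne fun h => hy.ne' ((h₂ _).1 y h.symm)⟩
  obtain ⟨Q, hQ, c, hc, hQdiv⟩ := exists_renyiDiv_one_eq_midpoint_add hq₁ hq₂ hne hcommon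
  have hmid := fun x => hQdiv (W x) (hW x) (h₁ x).1 (h₂ x).1
  obtain ⟨x, hx⟩ := exists_renyiInfo_one_le_renyiDiv_one hW hP hQ fun x => (hmid x).1
  linarith [(hmid x).2, (h₁ x).2, (h₂ x).2]

theorem exists_ofReal_renyiInfo_one_le_renyiDivE_one {W : X → Y → ℝ} (hW : ∀ x, IsPMF (W x))
    {P : X → ℝ} (hP : IsPMF P) {Q : Y → ℝ} (hQ : IsPMF Q) :
    ∃ x, ENNReal.ofReal (renyiInfo 1 P W) ≤ renyiDivE 1 (W x) Q := by
  by_cases hac : ∀ x y, Q y = 0 → W x y = 0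
  · obtain ⟨x, hx⟩ := exists_renyiInfo_one_le_renyiDiv_one hW hP hQ hac
    exact ⟨x, ofReal_le_renyiDivE_one fun _ => hx⟩
  · push Not at hac
    obtain ⟨x, y, hy, hWy⟩ := hac
    exact ⟨x, ofReal_le_renyiDivE_one fun h => absurd (h y hy) hWy⟩

theorem radius_eq_and_existsUnique_of_one [Nonempty X] {W : X → Y → ℝ}
    (hW : ∀ x, IsPMF (W x)) :
    (⨅ Q ∈ {Q : Y → ℝ | IsPMF Q}, ⨆ x, renyiDivE 1 (W x) Q)
      = ENNReal.ofReal (renyiCap 1 W) ∧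
    ∃! q : Y → ℝ, IsPMF q ∧
      (⨆ x, renyiDivE 1 (W x) q) = ENNReal.ofReal (renyiCap 1 W) := by
  classical
  obtain ⟨P, (hP : IsPMF P), hmax⟩ := (isCompact_stdSimplex ℝ X).exists_isMaxOn
    ⟨_, isPMF_single (Classical.arbitrary X)⟩ (continuousOn_renyiInfo_one fun x => (hW x).1)
  have hC : 0 ≤ renyiInfo 1 P W :=
    renyiInfo_one_single (W := W) (Classical.arbitrary X) ▸ hmax (isPMF_single _)
  have hcenter (x : X) : renyiDivE 1 (W x) (fun y => ∑ x', P x' * W x' y)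
      ≤ ENNReal.ofReal (renyiInfo 1 P W) :=
    renyiDivE_one_le_of_forall_mix_le (hW x) (hP.sum_mul hW) hC
      fun _ ht => renyiDiv_one_mix_le_of_isMaxOn hW hP hmax x ht
  rw [renyiCap_eq_of_isMaxOn hP hmax]
  refine radius_eq_and_existsUnique_of_center (hP.sum_mul hW) hcenter
    (fun Q hQ => exists_ofReal_renyiInfo_one_le_renyiDivE_one hW hP hQ) fun Q hQ hQc => ?_
  exact eq_of_renyiDiv_one_le hW hP hQ (hP.sum_mul hW)
    (fun x => (renyiDivE_one_le_ofReal_iff hC).1 (hQc x))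
    (fun x => (renyiDivE_one_le_ofReal_iff hC).1 (hcenter x))

end OrderOne

end

/-- the Rényi capacity equals the Rényi radius, and there is a unique
Rényi center achieving the radius. -/
theorem renyiCap_eq_radius_and_center {X Y : Type*} [Fintype X] [Fintype Y] [Nonempty X]
    (α : ℝ) (hα : α ∈ Set.Ioc (0:ℝ) 1) (W : X → Y → ℝ) (hW : ∀ x, IsPMF (W x)) :
    (⨅ Q ∈ {Q : Y → ℝ | IsPMF Q}, ⨆ x, renyiDivE α (W x) Q)
      = ENNReal.ofReal (renyiCap α W) ∧
    ∃! q : Y → ℝ, IsPMF q ∧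
      (⨆ x, renyiDivE α (W x) q) = ENNReal.ofReal (renyiCap α W) := by
  rcases hα.2.eq_or_lt with rfl | hα1
  · exact radius_eq_and_existsUnique_of_one hW
  · exact radius_eq_and_existsUnique_of_lt_one hα.1 hα1 hW
end
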